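/- In the algebra S of finite and cofinite subsets of ω with operators K_n and C as defined, the operator E x = ⊓_n K_n x satisfies, for cofinite x ≠ 1 and even i: (E x)(i) = 0 iff i ≤ k(x); consequently for the element a = ω \ {0}, the pointwise infimum in 2^ω of {E^n a : n ∈ ω} is the set of odd numbers, which is neither finite nor cofinite, so it does not belong to S. -/
import Mathlib


open scoped Classical

/-- Finite and cofinite subsets of ω. -/
def FC : Set (Set ℕ) := {x | x.Finite ∨ xᶜ.Finite}

/-- For cofinite `x ≠ univ`, the least even `i` such that every even `j ≥ i` lies in `x`. -/
noncomputable def kk (x : Set ℕ) : ℕ :=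
  sInf {i | Even i ∧ ∀ j, Even j → i ≤ j → j ∈ x}

/-- The knowledge operators of the counterexample algebra. -/
noncomputable def Kop (N n : ℕ) (x : Set ℕ) : Set ℕ :=
  if x = Set.univ then Set.univ
  else if x.Finite then ∅
  else {i | (Odd i ∨ (if n % N = kk x % N then kk x < i else kk x ≤ i)) ∧ i ∈ x}

/-- The common knowledge operator of the counterexample algebra. -/
noncomputable def Cop (x : Set ℕ) : Set ℕ :=
  if x = Set.univ then Set.univ else ∅

/-- The "everyone knows" operator. -/
noncomputable def Eop (N : ℕ) (x : Set ℕ) : Set ℕ :=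
  ⋂ n ∈ Finset.range N, Kop N n x

lemma kk_nonempty {x : Set ℕ} (hx : xᶜ.Finite) :
    {i | Even i ∧ ∀ j, Even j → i ≤ j → j ∈ x}.Nonempty := by
  obtain ⟨m, hm⟩ := hx.bddAbove
  refine ⟨2 * (m + 1), ⟨m + 1, by ring⟩, fun j hj hij => ?_⟩
  by_contra hjx
  have := hm hjx
  omega

lemma kk_mem {x : Set ℕ} (hx : xᶜ.Finite) :
    Even (kk x) ∧ ∀ j, Even j → kk x ≤ j → j ∈ x :=
  Nat.sInf_mem (kk_nonempty hx)

lemma not_fin {x : Set ℕ} (hx : xᶜ.Finite) : ¬ x.Finite := by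
  intro h
  have : (Set.univ : Set ℕ).Finite := by
    rw [← Set.union_compl_self x]; exact h.union hx
  exact Set.infinite_univ this

lemma Kop_eq {x : Set ℕ} (hx : xᶜ.Finite) (hxu : x ≠ Set.univ) (N n : ℕ) :
    Kop N n x =
      {i | (Odd i ∨ (if n % N = kk x % N then kk x < i else kk x ≤ i)) ∧ i ∈ x} := by
  rw [Kop, if_neg hxu, if_neg (not_fin hx)]

lemma Eop_even_mem {x : Set ℕ} (hx : xᶜ.Finite) (hxu : x ≠ Set.univ)
    {N : ℕ} (hN : 1 ≤ N) {i : ℕ} (hi : Even i) :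
    i ∈ Eop N x ↔ kk x < i := by
  have hodd : ¬ Odd i := Nat.not_odd_iff_even.mpr hi
  constructor
  · intro h
    have hn : kk x % N ∈ Finset.range N := Finset.mem_range.mpr (Nat.mod_lt _ hN)
    have := Set.mem_iInter₂.mp h (kk x % N) hn
    rw [Kop_eq hx hxu] at this
    have h2 := this.1
    rw [if_pos (Nat.mod_mod_of_dvd _ (dvd_refl N))] at h2
    tauto
  · intro h
    refine Set.mem_iInter₂.mpr fun n hn => ?_
    rw [Kop_eq hx hxu]
    refine ⟨Or.inr ?_, (kk_mem hx).2 i hi (le_of_lt h)⟩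
    split
    · exact h
    · exact le_of_lt h

/-- auxiliary sets -/
def bb (m : ℕ) : Set ℕ := {i | i % 2 = 1 ∨ 2 * m + 2 ≤ i}

lemma bb_cofin (m : ℕ) : (bb m)ᶜ.Finite := by
  apply (Set.finite_Iio (2 * m + 2)).subset
  intro i hi
  simp only [bb, Set.mem_compl_iff, Set.mem_setOf_eq, not_or, not_le] at hi
  exact hi.2

lemma bb_ne_univ (m : ℕ) : bb m ≠ Set.univ := by
  intro h
  have : (0 : ℕ) ∈ bb m := h ▸ Set.mem_univ 0
  simp only [bb, Set.mem_setOf_eq] at this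
  omega

lemma kk_bb (m : ℕ) : kk (bb m) = 2 * m + 2 := by
  have hmem : (2 * m + 2) ∈ {i | Even i ∧ ∀ j, Even j → i ≤ j → j ∈ bb m} := by
    refine ⟨⟨m + 1, by ring⟩, fun j hj hij => Or.inr hij⟩
  have h1 : kk (bb m) ≤ 2 * m + 2 := Nat.sInf_le hmem
  have h2 := Nat.sInf_mem ⟨_, hmem⟩
  have h3 : kk (bb m) ∈ bb m := h2.2 _ h2.1 le_rfl
  have h4 : kk (bb m) % 2 = 0 := Nat.even_iff.mp h2.1
  have h5 : kk (bb m) % 2 = 1 ∨ 2 * m + 2 ≤ kk (bb m) := h3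
  omega

lemma Eop_bb {N : ℕ} (hN : 1 ≤ N) (m : ℕ) : Eop N (bb m) = bb (m + 1) := by
  ext i
  rcases Nat.even_or_odd i with hi | hi
  · rw [Eop_even_mem (bb_cofin m) (bb_ne_univ m) hN hi, kk_bb]
    have : i % 2 = 0 := Nat.even_iff.mp hi
    simp only [bb, Set.mem_setOf_eq]
    omega
  · have hodd : i % 2 = 1 := Nat.odd_iff.mp hi
    constructor
    · intro _
      exact Or.inl hodd
    · intro _
      refine Set.mem_iInter₂.mpr fun n hn => ?_
      rw [Kop_eq (bb_cofin m) (bb_ne_univ m)]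
      exact ⟨Or.inl hi, Or.inl hodd⟩

lemma iter_bb {N : ℕ} (hN : 1 ≤ N) (n : ℕ) : (Eop N)^[n] (bb 0) = bb n := by
  induction n with
  | zero => rfl
  | succ k ih => rw [Function.iterate_succ_apply', ih, Eop_bb hN]

/-- For cofinite `x ≠ univ` and even `i`, `i ∉ E x` iff `i ≤ k(x)`; consequently the
pointwise infimum of `{Eⁿ a : n ∈ ω}` for `a = ω \ {0}` is the set of odd numbers,
which is neither finite nor cofinite, hence not in `FC`. -/
theorem stmt9 (N : ℕ) (hN : 1 ≤ N) :
    (∀ x : Set ℕ, xᶜ.Finite → x ≠ Set.univ → ∀ i, Even i → (i ∉ Eop N x ↔ i ≤ kk x)) ∧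
    (⋂ n : ℕ, (Eop N)^[n] ({0}ᶜ : Set ℕ)) = {i : ℕ | Odd i} ∧
    {i : ℕ | Odd i} ∉ FC := by
  refine ⟨fun x hx hxu i hi => ?_, ?_, ?_⟩
  · rw [Eop_even_mem hx hxu hN hi]
    omega
  · have ha : ({0}ᶜ : Set ℕ) = bb 0 := by
      ext i
      simp only [bb, Set.mem_compl_iff, Set.mem_singleton_iff, Set.mem_setOf_eq]
      omega
    rw [ha, Set.iInter_congr (iter_bb hN)]
    ext i
    simp only [Set.mem_iInter, Set.mem_setOf_eq, Nat.odd_iff]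
    constructor
    · intro h
      have : i % 2 = 1 ∨ 2 * i + 2 ≤ i := h i
      omega
    · intro h n
      exact Or.inl h
  · have hinj1 : Function.Injective (fun n : ℕ => 2 * n + 1) := by
      intro a b hab
      simp only [] at hab
      omega
    have hinj2 : Function.Injective (fun n : ℕ => 2 * n) := by
      intro a b hab
      simp only [] at hab
      omega
    have hmem1 : ∀ n : ℕ, (fun n : ℕ => 2 * n + 1) n ∈ {i : ℕ | Odd i} := by
      intro n
      exact ⟨n, by ring⟩
    have hmem2 : ∀ n : ℕ, (fun n : ℕ => 2 * n) n ∈ {i : ℕ | Odd i}ᶜ := by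
      intro n
      simp only [Set.mem_compl_iff, Set.mem_setOf_eq, Nat.odd_iff]
      omega
    rintro (h | h)
    · exact (Set.infinite_of_injective_forall_mem hinj1 hmem1) h
    · exact (Set.infinite_of_injective_forall_mem hinj2 hmem2) h
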